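/- Let A be a skeletal Reedy category. A morphism f of presheaves on A × Δ is a fibration in the injective (vertical) model structure (i.e., ⟨∂a\f⟩ is a Kan fibration for every object a of A) if and only if ⟨f/Λⁿₖ⟩ is a trivial fibration of presheaves on A for all n ≥ 1 and 0 ≤ k ≤ n, if and only if ⟨f/v⟩ is a trivial fibration for every anodyne extension v of simplicial sets. -/

import Mathlib

/-!
The external product `⊠` is the left adjoint of a two-variable adjunction with `U \ X` and
`X / S`, so a lifting problem of the pushout-product `u ⊠' v` against `f` transposes both to `v`
against `⟨u\f⟩` and to `u` against `⟨f/v⟩`. Hence `⟨∂a\f⟩` is a Kan fibration for every `a` iff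
every `⟨f/Λⁿₖ⟩` lifts against every boundary inclusion `∂a → a`. Over a skeletal Reedy category
this already makes a map a trivial fibration: take a maximal partial lift (Zorn); an element `x`
of minimal degree outside its domain has its boundary inside the domain and is nondegenerate
(the maps of `A₋` through which `x` is pulled back are determined by the resulting element), so
a lift against `∂a → a` extends the partial lift to `x`. Finally, anodyne extensions lift against
every map with the right lifting property against the horns.
-/

open CategoryTheory CategoryTheory.Limits

universe w v u

namespace Paper

variable {M : Type u} [Category.{v} M]

/-- The class of morphisms with the left lifting property with respect to every morphism in `C`. -/
def llp (C : MorphismProperty M) : MorphismProperty M :=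
  fun _ _ i => ∀ ⦃Z T : M⦄ (p : Z ⟶ T), C p → HasLiftingProperty i p

/-- The class of morphisms with the right lifting property with respect to every morphism in `C`. -/
def rlp (C : MorphismProperty M) : MorphismProperty M :=
  fun _ _ p => ∀ ⦃U V : M⦄ (i : U ⟶ V), C i → HasLiftingProperty i p

/-- Stability under retracts (in the arrow category). -/
def StableUnderRetracts (P : MorphismProperty M) : Prop :=
  ∀ ⦃X Y X' Y' : M⦄ (f : X ⟶ Y) (f' : X' ⟶ Y')
    (i : Arrow.mk f' ⟶ Arrow.mk f) (r : Arrow.mk f ⟶ Arrow.mk f'),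
      i ≫ r = 𝟙 _ → P f → P f'

/-- The restriction of a transfinite sequence to the indices below `b`. -/
def restrictionLT {β : Type w} [Preorder β] (F : β ⥤ M) (b : β) : {i : β // i < b} ⥤ M :=
  (Monotone.functor (f := fun i : {i : β // i < b} => (i : β)) fun _ _ h => h) ⋙ F

/-- The cocone over the restriction of `F` to indices `< b`, with apex `F.obj b`. -/
@[simps]
def coconeLT {β : Type w} [Preorder β] (F : β ⥤ M) (b : β) :
    Cocone (restrictionLT F b) where
  pt := F.obj b
  ι :=
    { app := fun i => F.map (homOfLE i.2.le)
      naturality := fun i j g => by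
        dsimp [restrictionLT, Monotone.functor]
        rw [Category.comp_id, ← F.map_comp]
        congr 1 }

/-- A class of morphisms is stable under transfinite composition if, for every
well-ordered continuous sequence whose successor maps lie in `P`, the canonical map from the
first object to a colimit of the sequence lies in `P`. -/
def StableUnderTransfiniteComposition (P : MorphismProperty M) : Prop :=
  ∀ (β : Type w) (_ : LinearOrder β) (_ : OrderBot β) (_ : SuccOrder β)
    (_ : WellFoundedLT β) (F : β ⥤ M),
    (∀ b : β, Order.IsSuccLimit b → Nonempty (IsColimit (coconeLT F b))) →
    (∀ b : β, ¬IsMax b → P (F.map (homOfLE (Order.le_succ b)))) →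
    ∀ (c : Cocone F), IsColimit c → P (c.ι.app ⊥)

/-- Trivial fibrations: morphisms with the right lifting property with respect to all
monomorphisms. -/
def IsTrivFib {X Y : M} (f : X ⟶ Y) : Prop :=
  ∀ ⦃U V : M⦄ (i : U ⟶ V), Mono i → HasLiftingProperty i f

end Paper

open CategoryTheory CategoryTheory.Limits Opposite

namespace Paper

variable {A : Type} [SmallCategory A] {B : Type} [SmallCategory B]

/-- The external product `X ⊠ Y` of presheaves: `(X ⊠ Y)_{a,b} = X_a × Y_b`. -/
@[simps]
def extProd (X : Aᵒᵖ ⥤ Type) (Y : Bᵒᵖ ⥤ Type) : (A × B)ᵒᵖ ⥤ Type where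
  obj ab := X.obj (op ab.unop.1) × Y.obj (op ab.unop.2)
  map f := TypeCat.ofHom (fun p => (X.map f.unop.1.op p.1, Y.map f.unop.2.op p.2))

/-- Functoriality of the external product. -/
@[simps]
def extProdMap {X X' : Aᵒᵖ ⥤ Type} {Y Y' : Bᵒᵖ ⥤ Type} (u : X ⟶ X') (v : Y ⟶ Y') :
    extProd X Y ⟶ extProd X' Y' where
  app ab := TypeCat.ofHom (fun p => (u.app _ p.1, v.app _ p.2))
  naturality ab ab' f := by
    refine ConcreteCategory.hom_ext _ _ fun p => ?_
    exact Prod.ext (FunctorToTypes.naturality u _ _) (FunctorToTypes.naturality v _ _)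

lemma extProdMap_id (X : Aᵒᵖ ⥤ Type) (Y : Bᵒᵖ ⥤ Type) :
    extProdMap (𝟙 X) (𝟙 Y) = 𝟙 (extProd X Y) := rfl

lemma extProdMap_comp {X X' X'' : Aᵒᵖ ⥤ Type} {Y Y' Y'' : Bᵒᵖ ⥤ Type}
    (u : X ⟶ X') (u' : X' ⟶ X'') (v : Y ⟶ Y') (v' : Y' ⟶ Y'') :
    extProdMap (u ≫ u') (v ≫ v') = extProdMap u v ≫ extProdMap u' v' := rfl

lemma extProdMap_comp_right (X : Aᵒᵖ ⥤ Type) {Y Y' Y'' : Bᵒᵖ ⥤ Type}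
    (v : Y ⟶ Y') (v' : Y' ⟶ Y'') :
    extProdMap (𝟙 X) (v ≫ v') = extProdMap (𝟙 X) v ≫ extProdMap (𝟙 X) v' := by
  rw [← extProdMap_comp, Category.id_comp]

lemma extProdMap_comp_left {X X' X'' : Aᵒᵖ ⥤ Type} (u : X ⟶ X') (u' : X' ⟶ X'')
    (Y : Bᵒᵖ ⥤ Type) :
    extProdMap (u ≫ u') (𝟙 Y) = extProdMap u (𝟙 Y) ≫ extProdMap u' (𝟙 Y) := by
  rw [← extProdMap_comp, Category.id_comp]

/-- The pushout-product `u ⊠' v : U ⊠ T ⊔_{U ⊠ S} V ⊠ S → V ⊠ T`. -/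
noncomputable def pushoutProduct {U V : Aᵒᵖ ⥤ Type} {S T : Bᵒᵖ ⥤ Type}
    (u : U ⟶ V) (v : S ⟶ T) :
    pushout (extProdMap (𝟙 U) v) (extProdMap u (𝟙 S)) ⟶ extProd V T :=
  pushout.desc (extProdMap u (𝟙 T)) (extProdMap (𝟙 V) v)
    (by rw [← extProdMap_comp, ← extProdMap_comp, Category.id_comp, Category.id_comp,
      Category.comp_id, Category.comp_id])

/-- `U \ X`, the presheaf on `B` with `(U\X)_b = Hom(U ⊠ b, X)`. -/
@[simps]
def bs (U : Aᵒᵖ ⥤ Type) (X : (A × B)ᵒᵖ ⥤ Type) : Bᵒᵖ ⥤ Type where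
  obj b := extProd U (yoneda.obj b.unop) ⟶ X
  map g := TypeCat.ofHom (fun φ => extProdMap (𝟙 U) (yoneda.map g.unop) ≫ φ)
  map_id b := by
    refine ConcreteCategory.hom_ext _ _ fun φ => ?_
    simp only [types_comp_apply, types_id_apply]
    dsimp
    rw [CategoryTheory.Functor.map_id, extProdMap_id, Category.id_comp]
  map_comp g h := by
    refine ConcreteCategory.hom_ext _ _ fun φ => ?_
    simp only [types_comp_apply, types_id_apply]
    dsimp
    rw [CategoryTheory.Functor.map_comp, extProdMap_comp_right, Category.assoc]

/-- `X / S`, the presheaf on `A` with `(X/S)_a = Hom(a ⊠ S, X)`. -/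
@[simps]
def sl (X : (A × B)ᵒᵖ ⥤ Type) (S : Bᵒᵖ ⥤ Type) : Aᵒᵖ ⥤ Type where
  obj a := extProd (yoneda.obj a.unop) S ⟶ X
  map g := TypeCat.ofHom (fun φ => extProdMap (yoneda.map g.unop) (𝟙 S) ≫ φ)
  map_id a := by
    refine ConcreteCategory.hom_ext _ _ fun φ => ?_
    simp only [types_comp_apply, types_id_apply]
    dsimp
    rw [CategoryTheory.Functor.map_id, extProdMap_id, Category.id_comp]
  map_comp g h := by
    refine ConcreteCategory.hom_ext _ _ fun φ => ?_
    simp only [types_comp_apply, types_id_apply]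
    dsimp
    rw [CategoryTheory.Functor.map_comp, extProdMap_comp_left, Category.assoc]

/-- Contravariant functoriality of `U \ X` in `U`. -/
@[simps]
def bsMapLeft {U V : Aᵒᵖ ⥤ Type} (u : U ⟶ V) (X : (A × B)ᵒᵖ ⥤ Type) :
    bs V X ⟶ bs U X where
  app b := TypeCat.ofHom (fun φ => extProdMap u (𝟙 _) ≫ φ)
  naturality b b' g := by
    refine ConcreteCategory.hom_ext _ _ fun (φ : extProd V (yoneda.obj b.unop) ⟶ X) => ?_
    show extProdMap u (𝟙 _) ≫ extProdMap (𝟙 V) (yoneda.map g.unop) ≫ φ =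
      extProdMap (𝟙 U) (yoneda.map g.unop) ≫ extProdMap u (𝟙 _) ≫ φ
    rw [← Category.assoc, ← Category.assoc, ← extProdMap_comp, ← extProdMap_comp,
      Category.id_comp, Category.comp_id, Category.id_comp, Category.comp_id]

/-- Covariant functoriality of `U \ X` in `X`. -/
@[simps]
def bsMapRight (U : Aᵒᵖ ⥤ Type) {X Y : (A × B)ᵒᵖ ⥤ Type} (f : X ⟶ Y) :
    bs U X ⟶ bs U Y where
  app b := TypeCat.ofHom (fun φ => φ ≫ f)
  naturality b b' g := by
    refine ConcreteCategory.hom_ext _ _ fun (φ : extProd U (yoneda.obj b.unop) ⟶ X) => ?_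
    show (extProdMap (𝟙 U) (yoneda.map g.unop) ≫ φ) ≫ f =
      extProdMap (𝟙 U) (yoneda.map g.unop) ≫ φ ≫ f
    rw [Category.assoc]

/-- Contravariant functoriality of `X / S` in `S`. -/
@[simps]
def slMapLeft {S T : Bᵒᵖ ⥤ Type} (v : S ⟶ T) (X : (A × B)ᵒᵖ ⥤ Type) :
    sl X T ⟶ sl X S where
  app a := TypeCat.ofHom (fun φ => extProdMap (𝟙 _) v ≫ φ)
  naturality a a' g := by
    refine ConcreteCategory.hom_ext _ _ fun (φ : extProd (yoneda.obj a.unop) T ⟶ X) => ?_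
    show extProdMap (𝟙 _) v ≫ extProdMap (yoneda.map g.unop) (𝟙 T) ≫ φ =
      extProdMap (yoneda.map g.unop) (𝟙 S) ≫ extProdMap (𝟙 _) v ≫ φ
    rw [← Category.assoc, ← Category.assoc, ← extProdMap_comp, ← extProdMap_comp,
      Category.id_comp, Category.comp_id, Category.id_comp, Category.comp_id]

/-- Covariant functoriality of `X / S` in `X`. -/
@[simps]
def slMapRight {X Y : (A × B)ᵒᵖ ⥤ Type} (f : X ⟶ Y) (S : Bᵒᵖ ⥤ Type) :
    sl X S ⟶ sl Y S where
  app a := TypeCat.ofHom (fun φ => φ ≫ f)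
  naturality a a' g := by
    refine ConcreteCategory.hom_ext _ _ fun (φ : extProd (yoneda.obj a.unop) S ⟶ X) => ?_
    show (extProdMap (yoneda.map g.unop) (𝟙 S) ≫ φ) ≫ f =
      extProdMap (yoneda.map g.unop) (𝟙 S) ≫ φ ≫ f
    rw [Category.assoc]

/-- The pullback-hom `⟨u \ f⟩ : V\X ⟶ V\Y ×_{U\Y} U\X`. -/
noncomputable def bsCorner {U V : Aᵒᵖ ⥤ Type} {X Y : (A × B)ᵒᵖ ⥤ Type}
    (u : U ⟶ V) (f : X ⟶ Y) :
    bs V X ⟶ pullback (bsMapLeft u Y) (bsMapRight U f) :=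
  pullback.lift (bsMapRight V f) (bsMapLeft u X) (by
    ext b (φ : extProd V (yoneda.obj b.unop) ⟶ X)
    show extProdMap u (𝟙 _) ≫ φ ≫ f = (extProdMap u (𝟙 _) ≫ φ) ≫ f
    rw [Category.assoc])

/-- The pullback-hom `⟨f / v⟩ : X/T ⟶ Y/T ×_{Y/S} X/S`. -/
noncomputable def slCorner {X Y : (A × B)ᵒᵖ ⥤ Type} {S T : Bᵒᵖ ⥤ Type}
    (f : X ⟶ Y) (v : S ⟶ T) :
    sl X T ⟶ pullback (slMapLeft v Y) (slMapRight f S) :=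
  pullback.lift (slMapRight f T) (slMapLeft v X) (by
    ext a (φ : extProd (yoneda.obj a.unop) T ⟶ X)
    show extProdMap (𝟙 _) v ≫ φ ≫ f = (extProdMap (𝟙 _) v ≫ φ) ≫ f
    rw [Category.assoc])

end Paper

namespace Paper

open CategoryTheory CategoryTheory.Limits Opposite

/-- A skeletal Reedy category structure on `A`: wide subcategories `A₊` and `A₋` of degree
raising resp. lowering morphisms, unique factorization, and the skeletality axiom (every
morphism of `A₋` admits a section, and parallel morphisms of `A₋` with the same sections are
equal). -/
structure SkeletalReedy (A : Type) [SmallCategory A] where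
  plus : MorphismProperty A
  minus : MorphismProperty A
  plus_mul : plus.IsMultiplicative
  minus_mul : minus.IsMultiplicative
  deg : A → ℕ
  plus_deg : ∀ ⦃a b : A⦄ (f : a ⟶ b), plus f → a ≠ b → deg a < deg b
  plus_endo : ∀ ⦃a : A⦄ (f : a ⟶ a), plus f → f = 𝟙 a
  minus_deg : ∀ ⦃a b : A⦄ (f : a ⟶ b), minus f → a ≠ b → deg b < deg a
  minus_endo : ∀ ⦃a : A⦄ (f : a ⟶ a), minus f → f = 𝟙 a
  fact : ∀ ⦃a b : A⦄ (f : a ⟶ b),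
    ∃ (c : A) (g : a ⟶ c) (h : c ⟶ b), minus g ∧ plus h ∧ g ≫ h = f
  fact_unique : ∀ ⦃a b : A⦄ (c c' : A) (g : a ⟶ c) (h : c ⟶ b) (g' : a ⟶ c') (h' : c' ⟶ b),
    minus g → plus h → minus g' → plus h' → g ≫ h = g' ≫ h' →
    ∃ e : c = c', g ≫ eqToHom e = g' ∧ eqToHom e ≫ h' = h
  minus_section : ∀ ⦃a b : A⦄ (f : a ⟶ b), minus f → ∃ s : b ⟶ a, s ≫ f = 𝟙 b
  minus_skeletal : ∀ ⦃a b : A⦄ (f g : a ⟶ b), minus f → minus g →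
    (∀ s : b ⟶ a, s ≫ f = 𝟙 b ↔ s ≫ g = 𝟙 b) → f = g

variable {A : Type} [SmallCategory A]

/-- The boundary `∂a` of a representable presheaf on a skeletal Reedy category: the union of
the images of all non-identity morphisms of `A₊` (equivalently, those strictly raising the
degree) with target `a`. -/
@[simps]
def bdry (R : SkeletalReedy A) (a : A) : Aᵒᵖ ⥤ Type where
  obj s := {f : s.unop ⟶ a //
    ∃ (b : A) (g : s.unop ⟶ b) (m : b ⟶ a), R.plus m ∧ R.deg b < R.deg a ∧ g ≫ m = f}
  map h := TypeCat.ofHom (fun f => ⟨h.unop ≫ f.1, by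
    obtain ⟨b, g, m, h1, h2, h3⟩ := f.2
    exact ⟨b, h.unop ≫ g, m, h1, h2, by rw [Category.assoc, h3]⟩⟩)
  map_id s := by
    refine ConcreteCategory.hom_ext _ _ fun f => ?_
    simp only [types_comp_apply, types_id_apply]
    apply Subtype.ext
    simp
  map_comp g h := by
    refine ConcreteCategory.hom_ext _ _ fun f => ?_
    simp only [types_comp_apply, types_id_apply]
    apply Subtype.ext
    simp

/-- The boundary inclusion `∂a → a`. -/
@[simps]
def bdryHom (R : SkeletalReedy A) (a : A) : bdry R a ⟶ yoneda.obj a where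
  app s := TypeCat.ofHom (fun f => f.1)
  naturality s s' h := rfl

end Paper

namespace Paper

/-- Kan fibrations: morphisms of simplicial sets with the right lifting property with
respect to the horn inclusions `Λⁿₖ → Δⁿ`, `n ≥ 1`, `0 ≤ k ≤ n`. -/
def IsKanFib {X Y : SimplexCategoryᵒᵖ ⥤ Type} (f : X ⟶ Y) : Prop :=
  ∀ (n : ℕ) (i : Fin (n + 1)), 0 < n → HasLiftingProperty ((SSet.horn n i).ι) f

/-- The class of horn inclusions `Λⁿₖ → Δⁿ`, `n ≥ 1` (up to isomorphism of arrows). -/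
def hornClass : MorphismProperty (SimplexCategoryᵒᵖ ⥤ Type) := fun _ _ g =>
  ∃ (n : ℕ) (i : Fin (n + 1)), 0 < n ∧
    Nonempty (CategoryTheory.Arrow.mk g ≅ CategoryTheory.Arrow.mk ((SSet.horn n i).ι))

/-- Anodyne extensions: the saturation `l(r(Λ))` of the set of horn inclusions. -/
def anodyne : MorphismProperty (SimplexCategoryᵒᵖ ⥤ Type) := llp (rlp hornClass)

end Paper

namespace Paper

open CategoryTheory CategoryTheory.Limits Opposite

variable {A : Type} [SmallCategory A] {B : Type} [SmallCategory B]

def extProdFunctor : (Aᵒᵖ ⥤ Type) ⥤ (Bᵒᵖ ⥤ Type) ⥤ ((A × B)ᵒᵖ ⥤ Type) where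
  obj U :=
    { obj := extProd U
      map := extProdMap (𝟙 U)
      map_comp := extProdMap_comp_right U }
  map u := { app := fun S => extProdMap u (𝟙 S) }

def bsFunctor : (Aᵒᵖ ⥤ Type)ᵒᵖ ⥤ ((A × B)ᵒᵖ ⥤ Type) ⥤ (Bᵒᵖ ⥤ Type) where
  obj U :=
    { obj := bs U.unop
      map := bsMapRight U.unop }
  map u := { app := fun X => bsMapLeft u.unop X }

def slFunctor : (Bᵒᵖ ⥤ Type)ᵒᵖ ⥤ ((A × B)ᵒᵖ ⥤ Type) ⥤ (Aᵒᵖ ⥤ Type) where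
  obj S :=
    { obj := fun X => sl X S.unop
      map := fun f => slMapRight f S.unop }
  map v := { app := fun X => slMapLeft v.unop X }

section Bs

variable {U : Aᵒᵖ ⥤ Type} {S : Bᵒᵖ ⥤ Type} {X : (A × B)ᵒᵖ ⥤ Type}

def bsCurry (φ : extProd U S ⟶ X) : S ⟶ bs U X where
  app b := TypeCat.ofHom fun s => extProdMap (𝟙 U) (yonedaEquiv.symm s) ≫ φ
  naturality b b' g := ConcreteCategory.hom_ext _ _ fun s => by
    change extProdMap (𝟙 U) (yonedaEquiv.symm (S.map g s)) ≫ φ =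
      extProdMap (𝟙 U) (yoneda.map g.unop) ≫ extProdMap (𝟙 U) (yonedaEquiv.symm s) ≫ φ
    rw [yonedaEquiv_symm_map, extProdMap_comp_right, Category.assoc]

def bsUncurry (α : S ⟶ bs U X) : extProd U S ⟶ X where
  app ab := TypeCat.ofHom fun p =>
    (α.app _ p.2).app ab ((p.1, 𝟙 ab.unop.2) : U.obj _ × (ab.unop.2 ⟶ ab.unop.2))
  naturality ab ab' g := ConcreteCategory.hom_ext _ _ fun p => by
    have h1 := congrArg (fun ψ : (bs U X).obj (op ab'.unop.2) => ψ.app ab'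
      ((U.map g.unop.1.op p.1, 𝟙 _) : U.obj _ × (ab'.unop.2 ⟶ ab'.unop.2)))
      (NatTrans.naturality_apply α g.unop.2.op p.2)
    have h2 := NatTrans.naturality_apply (α.app _ p.2) g
      ((p.1, 𝟙 _) : U.obj _ × (ab.unop.2 ⟶ ab.unop.2))
    refine h1.trans (Eq.trans ?_ h2)
    exact congrArg (fun z => (α.app (op ab.unop.2) p.2).app ab'
      ((U.map g.unop.1.op p.1, z) : U.obj _ × (ab'.unop.2 ⟶ ab.unop.2)))
      ((Category.id_comp _).trans (Category.comp_id _).symm)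

lemma bsUncurry_bsCurry (φ : extProd U S ⟶ X) : bsUncurry (bsCurry φ) = φ := by
  ext ab p
  exact congrArg (fun z => φ.app ab ((p.1, z) : (extProd U S).obj ab)) (S.map_id_apply _ p.2)

lemma bsCurry_bsUncurry (α : S ⟶ bs U X) : bsCurry (bsUncurry α) = α := by
  ext b : 2
  refine ConcreteCategory.hom_ext _ _ fun s => NatTrans.ext <| funext fun ab =>
    ConcreteCategory.hom_ext _ _ fun q => ?_
  have := congrArg (fun ψ : (bs U X).obj (op ab.unop.2) => ψ.app ab
    ((q.1, 𝟙 _) : U.obj _ × (ab.unop.2 ⟶ ab.unop.2))) (NatTrans.naturality_apply α q.2.op s)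
  refine this.trans ?_
  exact congrArg (fun z => (α.app b s).app ab ((q.1, z) : U.obj _ × (ab.unop.2 ⟶ b.unop)))
    (Category.id_comp _)

lemma bsCurry_comp_right {Y : (A × B)ᵒᵖ ⥤ Type} (φ : extProd U S ⟶ X) (f : X ⟶ Y) :
    bsCurry (φ ≫ f) = bsCurry φ ≫ bsMapRight U f := rfl

lemma bsCurry_comp_left {S' : Bᵒᵖ ⥤ Type} (v : S' ⟶ S) (φ : extProd U S ⟶ X) :
    bsCurry (extProdMap (𝟙 U) v ≫ φ) = v ≫ bsCurry φ := by
  ext b : 2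
  refine ConcreteCategory.hom_ext _ _ fun s => ?_
  change extProdMap (𝟙 U) (yonedaEquiv.symm s) ≫ extProdMap (𝟙 U) v ≫ φ =
    extProdMap (𝟙 U) (yonedaEquiv.symm (v.app b s)) ≫ φ
  rw [← yonedaEquiv_symm_naturality_right, extProdMap_comp_right, Category.assoc]

lemma bsUncurry_comp_left {S' : Bᵒᵖ ⥤ Type} (v : S' ⟶ S) (α : S ⟶ bs U X) :
    bsUncurry (v ≫ α) = extProdMap (𝟙 U) v ≫ bsUncurry α := by
  conv_lhs => rw [← bsCurry_bsUncurry α, ← bsCurry_comp_left, bsUncurry_bsCurry]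

end Bs

def extProdBsAdjunction : extProdFunctor (A := A) (B := B) ⊣₂ bsFunctor :=
  .mk' (fun _ => Adjunction.mkOfHomEquiv
    { homEquiv := fun _ _ =>
        { toFun := bsCurry
          invFun := bsUncurry
          left_inv := bsUncurry_bsCurry
          right_inv := bsCurry_bsUncurry }
      homEquiv_naturality_left_symm := bsUncurry_comp_left
      homEquiv_naturality_right := bsCurry_comp_right })
    (by intros; rfl)

section Sl

variable {U : Aᵒᵖ ⥤ Type} {T : Bᵒᵖ ⥤ Type} {X : (A × B)ᵒᵖ ⥤ Type}

def slCurry (φ : extProd U T ⟶ X) : U ⟶ sl X T where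
  app a := TypeCat.ofHom fun x => extProdMap (yonedaEquiv.symm x) (𝟙 T) ≫ φ
  naturality a a' g := ConcreteCategory.hom_ext _ _ fun x => by
    change extProdMap (yonedaEquiv.symm (U.map g x)) (𝟙 T) ≫ φ =
      extProdMap (yoneda.map g.unop) (𝟙 T) ≫ extProdMap (yonedaEquiv.symm x) (𝟙 T) ≫ φ
    rw [yonedaEquiv_symm_map, extProdMap_comp_left, Category.assoc]

def slUncurry (α : U ⟶ sl X T) : extProd U T ⟶ X where
  app ab := TypeCat.ofHom fun p =>
    (α.app _ p.1).app ab ((𝟙 ab.unop.1, p.2) : (ab.unop.1 ⟶ ab.unop.1) × T.obj _)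
  naturality ab ab' g := ConcreteCategory.hom_ext _ _ fun p => by
    have h1 := congrArg (fun ψ : (sl X T).obj (op ab'.unop.1) => ψ.app ab'
      ((𝟙 _, T.map g.unop.2.op p.2) : (ab'.unop.1 ⟶ ab'.unop.1) × T.obj _))
      (NatTrans.naturality_apply α g.unop.1.op p.1)
    have h2 := NatTrans.naturality_apply (α.app _ p.1) g
      ((𝟙 _, p.2) : (ab.unop.1 ⟶ ab.unop.1) × T.obj _)
    refine h1.trans (Eq.trans ?_ h2)
    exact congrArg (fun z => (α.app (op ab.unop.1) p.1).app ab'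
      ((z, T.map g.unop.2.op p.2) : (ab'.unop.1 ⟶ ab.unop.1) × T.obj _))
      ((Category.id_comp _).trans (Category.comp_id _).symm)

lemma slUncurry_slCurry (φ : extProd U T ⟶ X) : slUncurry (slCurry φ) = φ := by
  ext ab p
  exact congrArg (fun z => φ.app ab ((z, p.2) : (extProd U T).obj ab)) (U.map_id_apply _ p.1)

lemma slCurry_slUncurry (α : U ⟶ sl X T) : slCurry (slUncurry α) = α := by
  ext a : 2
  refine ConcreteCategory.hom_ext _ _ fun x => NatTrans.ext <| funext fun ab =>
    ConcreteCategory.hom_ext _ _ fun q => ?_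
  have := congrArg (fun ψ : (sl X T).obj (op ab.unop.1) => ψ.app ab
    ((𝟙 _, q.2) : (ab.unop.1 ⟶ ab.unop.1) × T.obj _)) (NatTrans.naturality_apply α q.1.op x)
  refine this.trans ?_
  exact congrArg (fun z => (α.app a x).app ab ((z, q.2) : (ab.unop.1 ⟶ a.unop) × T.obj _))
    (Category.id_comp _)

lemma slCurry_comp_right {Y : (A × B)ᵒᵖ ⥤ Type} (φ : extProd U T ⟶ X) (f : X ⟶ Y) :
    slCurry (φ ≫ f) = slCurry φ ≫ slMapRight f T := rfl

lemma slCurry_comp_left {U' : Aᵒᵖ ⥤ Type} (u : U' ⟶ U) (φ : extProd U T ⟶ X) :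
    slCurry (extProdMap u (𝟙 T) ≫ φ) = u ≫ slCurry φ := by
  ext a : 2
  refine ConcreteCategory.hom_ext _ _ fun x => ?_
  change extProdMap (yonedaEquiv.symm x) (𝟙 T) ≫ extProdMap u (𝟙 T) ≫ φ =
    extProdMap (yonedaEquiv.symm (u.app a x)) (𝟙 T) ≫ φ
  rw [← yonedaEquiv_symm_naturality_right, extProdMap_comp_left, Category.assoc]

lemma slUncurry_comp_left {U' : Aᵒᵖ ⥤ Type} (u : U' ⟶ U) (α : U ⟶ sl X T) :
    slUncurry (u ≫ α) = extProdMap u (𝟙 T) ≫ slUncurry α := by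
  conv_lhs => rw [← slCurry_slUncurry α, ← slCurry_comp_left, slUncurry_slCurry]

end Sl

def extProdSlAdjunction : (extProdFunctor (A := A) (B := B)).flip ⊣₂ slFunctor :=
  .mk' (fun _ => Adjunction.mkOfHomEquiv
    { homEquiv := fun _ _ =>
        { toFun := slCurry
          invFun := slUncurry
          left_inv := slUncurry_slCurry
          right_inv := slCurry_slUncurry }
      homEquiv_naturality_left_symm := slUncurry_comp_left
      homEquiv_naturality_right := slCurry_comp_right })
    (by intros; rfl)

section Corners

variable {U V : Aᵒᵖ ⥤ Type} {S T : Bᵒᵖ ⥤ Type} {X Y : (A × B)ᵒᵖ ⥤ Type}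

noncomputable def pushoutProductPushoutObjObj (u : U ⟶ V) (v : S ⟶ T) :
    extProdFunctor.PushoutObjObj u v where
  pt := pushout (extProdMap (𝟙 U) v) (extProdMap u (𝟙 S))
  inl := pushout.inr _ _
  inr := pushout.inl _ _
  isPushout := (IsPushout.of_hasPushout _ _).flip
  ι := pushoutProduct u v
  inl_ι := pushout.inr_desc _ _ _
  inr_ι := pushout.inl_desc _ _ _

noncomputable def bsCornerPullbackObjObj (u : U ⟶ V) (f : X ⟶ Y) :
    bsFunctor.PullbackObjObj u f where
  pt := pullback (bsMapLeft u Y) (bsMapRight U f)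
  fst := pullback.snd _ _
  snd := pullback.fst _ _
  isPullback := (IsPullback.of_hasPullback _ _).flip
  π := bsCorner u f
  π_fst := pullback.lift_snd _ _ _
  π_snd := pullback.lift_fst _ _ _

noncomputable def slCornerPullbackObjObj (f : X ⟶ Y) (v : S ⟶ T) :
    slFunctor.PullbackObjObj v f where
  pt := pullback (slMapLeft v Y) (slMapRight f S)
  fst := pullback.snd _ _
  snd := pullback.fst _ _
  isPullback := (IsPullback.of_hasPullback _ _).flip
  π := slCorner f v
  π_fst := pullback.lift_snd _ _ _
  π_snd := pullback.lift_fst _ _ _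

theorem hasLiftingProperty_pushoutProduct_iff_bsCorner (u : U ⟶ V) (v : S ⟶ T) (f : X ⟶ Y) :
    HasLiftingProperty (pushoutProduct u v) f ↔ HasLiftingProperty v (bsCorner u f) :=
  extProdBsAdjunction.hasLiftingProperty_iff (pushoutProductPushoutObjObj u v)
    (bsCornerPullbackObjObj u f)

theorem hasLiftingProperty_pushoutProduct_iff_slCorner (u : U ⟶ V) (v : S ⟶ T) (f : X ⟶ Y) :
    HasLiftingProperty (pushoutProduct u v) f ↔ HasLiftingProperty u (slCorner f v) :=
  extProdSlAdjunction.hasLiftingProperty_iff (pushoutProductPushoutObjObj u v).flip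
    (slCornerPullbackObjObj f v)

theorem hasLiftingProperty_bsCorner_iff_slCorner (u : U ⟶ V) (v : S ⟶ T) (f : X ⟶ Y) :
    HasLiftingProperty v (bsCorner u f) ↔ HasLiftingProperty u (slCorner f v) :=
  (hasLiftingProperty_pushoutProduct_iff_bsCorner u v f).symm.trans
    (hasLiftingProperty_pushoutProduct_iff_slCorner u v f)

end Corners

lemma injective_app_of_mono {C : Type*} [Category C] {F G : C ⥤ Type} (η : F ⟶ G) [Mono η]
    (c : C) : Function.Injective (η.app c) :=
  (mono_iff_injective _).1 inferInstance

instance mono_bdryHom (R : SkeletalReedy A) (a : A) : Mono (bdryHom R a) :=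
  (NatTrans.mono_iff_mono_app _).2 fun _ => (mono_iff_injective _).2 fun _ _ h => Subtype.ext h

namespace SkeletalReedy

variable (R : SkeletalReedy A)

lemma exists_bdry_or_minus {a b : A} (h : b ⟶ a) :
    (∃ c : (bdry R a).obj (op b), c.1 = h) ∨ R.minus h := by
  obtain ⟨c, g, m, hg, hm, rfl⟩ := R.fact h
  by_cases hc : R.deg c < R.deg a
  · exact Or.inl ⟨⟨g ≫ m, c, g, m, hm, hc, rfl⟩, rfl⟩
  · obtain rfl : c = a := by_contra fun hne => hc (R.plus_deg m hm hne)
    rw [R.plus_endo m hm, Category.comp_id]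
    exact Or.inr hg

variable {R} {V : Aᵒᵖ ⥤ Type} {P : Subfunctor V} {a : A} {x : V.obj (op a)}

lemma map_mem_of_bdry (hlow : ∀ b : A, R.deg b < R.deg a → ∀ y, y ∈ P.obj (op b))
    {s : Aᵒᵖ} (c : (bdry R a).obj s) : V.map c.1.op x ∈ P.obj s := by
  obtain ⟨b, g, m, -, hd, hgm⟩ := c.2
  rw [← hgm, op_comp, Functor.map_comp_apply]
  exact P.map g.op (hlow b hd _)

lemma map_notMem_of_minus (hx : x ∉ P.obj (op a)) {b : A} (h : b ⟶ a) (hh : R.minus h) :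
    V.map h.op x ∉ P.obj (op b) := by
  obtain ⟨σ, hσ⟩ := R.minus_section h hh
  intro hmem
  apply hx
  have : V.map σ.op (V.map h.op x) ∈ P.obj (op a) := P.map σ.op hmem
  rwa [← Functor.map_comp_apply, ← op_comp, hσ, op_id, Functor.map_id_apply] at this

lemma eq_id_of_map_eq_self (hx : x ∉ P.obj (op a))
    (hlow : ∀ b : A, R.deg b < R.deg a → ∀ y, y ∈ P.obj (op b))
    (φ : a ⟶ a) (hφ : V.map φ.op x = x) : φ = 𝟙 a := by
  obtain ⟨c, g, m, hg, hm, hgm⟩ := R.fact φ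
  obtain rfl : c = a := by
    by_contra hne
    apply hx
    have : V.map g.op (V.map m.op x) ∈ P.obj (op a) :=
      P.map g.op (hlow c (R.minus_deg g hg (Ne.symm hne)) (V.map m.op x))
    rwa [← Functor.map_comp_apply, ← op_comp, hgm, hφ] at this
  rw [← hgm, R.minus_endo g hg, R.plus_endo m hm, Category.comp_id]

lemma eq_of_map_eq_of_notMem (hx : x ∉ P.obj (op a))
    (hlow : ∀ b : A, R.deg b < R.deg a → ∀ y, y ∈ P.obj (op b))
    {b : A} (h h' : b ⟶ a) (e : V.map h.op x = V.map h'.op x)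
    (hnot : V.map h.op x ∉ P.obj (op b)) : h = h' := by
  have minus_of : ∀ k : b ⟶ a, V.map k.op x ∉ P.obj (op b) → R.minus k := fun k hk =>
    (R.exists_bdry_or_minus k).resolve_left fun ⟨c, hc⟩ => hk (hc ▸ map_mem_of_bdry hlow c)
  have sections : ∀ k k' : b ⟶ a, V.map k.op x = V.map k'.op x →
      ∀ σ : a ⟶ b, σ ≫ k = 𝟙 a → σ ≫ k' = 𝟙 a := fun k k' e σ hσ =>
    eq_id_of_map_eq_self hx hlow _ (by
      rw [op_comp, Functor.map_comp_apply, ← e, ← Functor.map_comp_apply, ← op_comp, hσ,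
        op_id, Functor.map_id_apply])
  exact R.minus_skeletal h h' (minus_of h hnot) (minus_of h' (e ▸ hnot))
    fun σ => ⟨sections h h' e σ, sections h' h e.symm σ⟩

end SkeletalReedy


structure PartialLift {U V Z W : Aᵒᵖ ⥤ Type} (i : U ⟶ V) (p : Z ⟶ W)
    (t : U ⟶ Z) (b : V ⟶ W) where
  dom : Subfunctor V
  range_le : Subfunctor.range i ≤ dom
  lift : ∀ s, dom.obj s → Z.obj s
  naturality : ∀ ⦃s s' : Aᵒᵖ⦄ (g : s ⟶ s') (y : dom.obj s),
    lift s' ⟨V.map g y, dom.map g y.2⟩ = Z.map g (lift s y)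
  fac_left : ∀ s x, lift s ⟨i.app s x, range_le s ⟨x, rfl⟩⟩ = t.app s x
  fac_right : ∀ s y, p.app s (lift s y) = b.app s y

namespace PartialLift

variable {U V Z W : Aᵒᵖ ⥤ Type} {i : U ⟶ V} {p : Z ⟶ W} {t : U ⟶ Z} {b : V ⟶ W}

instance : Preorder (PartialLift i p t b) where
  le L L' := ∃ h : L.dom ≤ L'.dom, ∀ s y, L'.lift s ⟨y.1, h s y.2⟩ = L.lift s y
  le_refl L := ⟨le_rfl, fun _ _ => rfl⟩
  le_trans _ _ _ := fun ⟨h₁, e₁⟩ ⟨h₂, e₂⟩ =>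
    ⟨h₁.trans h₂, fun s y => (e₂ s ⟨y.1, h₁ s y.2⟩).trans (e₁ s y)⟩

lemma le_iff {L L' : PartialLift i p t b} :
    L ≤ L' ↔ ∃ h : L.dom ≤ L'.dom, ∀ s y, L'.lift s ⟨y.1, h s y.2⟩ = L.lift s y :=
  Iff.rfl

noncomputable def ofMono [Mono i] (hw : t ≫ p = i ≫ b) : PartialLift i p t b where
  dom := Subfunctor.range i
  range_le := le_rfl
  lift s y := t.app s y.2.choose
  naturality s s' g y := by
    have e : i.app s' (U.map g y.2.choose) = V.map g y := by
      rw [NatTrans.naturality_apply, y.2.choose_spec]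
    dsimp only
    rw [injective_app_of_mono i s' (((Subfunctor.range i).map g y.2).choose_spec.trans e.symm),
      NatTrans.naturality_apply]
  fac_left s x := by
    dsimp only
    rw [injective_app_of_mono i s (Set.mem_range_self (f := i.app s) x).choose_spec]
  fac_right s y := by
    rw [← ConcreteCategory.comp_apply, ← NatTrans.comp_app, hw, NatTrans.comp_app,
      ConcreteCategory.comp_apply, y.2.choose_spec]

lemma lift_eq_of_isChain {c : Set (PartialLift i p t b)} (hc : IsChain (· ≤ ·) c)
    {L L' : PartialLift i p t b} (hL : L ∈ c) (hL' : L' ∈ c) {s : Aᵒᵖ} {y : V.obj s}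
    (hy : y ∈ L.dom.obj s) (hy' : y ∈ L'.dom.obj s) :
    L.lift s ⟨y, hy⟩ = L'.lift s ⟨y, hy'⟩ := by
  rcases hc.total hL hL' with h | h
  · exact ((le_iff.1 h).2 s ⟨y, hy⟩).symm
  · exact (le_iff.1 h).2 s ⟨y, hy'⟩

lemma mem_iSup_dom {c : Set (PartialLift i p t b)} {s : Aᵒᵖ} {y : V.obj s} :
    y ∈ (⨆ L : c, L.1.dom).obj s ↔ ∃ L : c, y ∈ L.1.dom.obj s := by
  simp

noncomputable def ofChain (c : Set (PartialLift i p t b)) (hc : IsChain (· ≤ ·) c)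
    {L₀ : PartialLift i p t b} (hL₀ : L₀ ∈ c) : PartialLift i p t b where
  dom := ⨆ L : c, L.1.dom
  range_le := le_trans L₀.range_le (le_iSup (fun L : c => L.1.dom) ⟨L₀, hL₀⟩)
  lift s y := (mem_iSup_dom.1 y.2).choose.1.lift s ⟨y, (mem_iSup_dom.1 y.2).choose_spec⟩
  naturality s s' g y := by
    obtain ⟨L, hy⟩ := mem_iSup_dom.1 y.2
    dsimp only
    have hgy : V.map g y.1 ∈ L.1.dom.obj s' := L.1.dom.map g hy
    rw [lift_eq_of_isChain hc (Subtype.prop _) L.2 _ hgy,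
      lift_eq_of_isChain hc (Subtype.prop _) L.2 _ hy]
    exact L.1.naturality g ⟨y.1, hy⟩
  fac_left s x := by
    dsimp only
    rw [lift_eq_of_isChain hc (Subtype.prop _) hL₀ _ (L₀.range_le s ⟨x, rfl⟩),
      L₀.fac_left]
  fac_right s y := PartialLift.fac_right _ s _

lemma le_ofChain (c : Set (PartialLift i p t b)) (hc : IsChain (· ≤ ·) c)
    {L₀ : PartialLift i p t b} (hL₀ : L₀ ∈ c) {L : PartialLift i p t b} (hL : L ∈ c) :
    L ≤ ofChain c hc hL₀ :=
  le_iff.2 ⟨fun _ _ hy => mem_iSup_dom.2 ⟨⟨L, hL⟩, hy⟩, fun _ y =>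
    lift_eq_of_isChain hc (Subtype.prop _) hL _ y.2⟩

section Extension

variable (L : PartialLift i p t b) {a : A} (x : V.obj (op a)) (z : yoneda.obj a ⟶ Z)

lemma exists_eq_map_of_notMem {s : Aᵒᵖ} (y : (L.dom ⊔ Subfunctor.ofSection x).obj s)
    (hy : y.1 ∉ L.dom.obj s) : ∃ f : op a ⟶ s, V.map f x = y.1 :=
  y.2.resolve_left hy

open Classical in
noncomputable def extendLift (s : Aᵒᵖ) (y : (L.dom ⊔ Subfunctor.ofSection x).obj s) :
    Z.obj s :=
  if hy : y.1 ∈ L.dom.obj s then L.lift s ⟨y.1, hy⟩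
  else z.app s (exists_eq_map_of_notMem L x y hy).choose.unop

variable {L x z}

lemma extendLift_of_mem {s : Aᵒᵖ} (y : (L.dom ⊔ Subfunctor.ofSection x).obj s)
    (hy : y.1 ∈ L.dom.obj s) : extendLift L x z s y = L.lift s ⟨y.1, hy⟩ :=
  dif_pos hy

lemma extendLift_eq
    (hz : ∀ s (f : op a ⟶ s) (hf : V.map f x ∈ L.dom.obj s),
      z.app s f.unop = L.lift s ⟨_, hf⟩)
    (huniq : ∀ s (f f' : op a ⟶ s), V.map f x = V.map f' x → V.map f x ∉ L.dom.obj s →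
      f = f')
    {s : Aᵒᵖ} (y : (L.dom ⊔ Subfunctor.ofSection x).obj s) (f : op a ⟶ s)
    (hf : V.map f x = y.1) :
    extendLift L x z s y = z.app s f.unop := by
  by_cases hy : y.1 ∈ L.dom.obj s
  · rw [extendLift_of_mem _ hy, hz s f (hf ▸ hy)]
    simp only [hf]
  · have hspec := (exists_eq_map_of_notMem L x y hy).choose_spec
    rw [extendLift, dif_neg hy, huniq s _ f (hspec.trans hf.symm) (by rwa [hspec])]

/-- Glues `L` with a lift `z` over the representable at `x`; `huniq` makes the glued lift well
defined on the new elements `V.map f x`. -/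
lemma exists_le_mem_dom
    (hz : ∀ s (f : op a ⟶ s) (hf : V.map f x ∈ L.dom.obj s),
      z.app s f.unop = L.lift s ⟨_, hf⟩)
    (hzp : z ≫ p = yonedaEquiv.symm x ≫ b)
    (huniq : ∀ s (f f' : op a ⟶ s), V.map f x = V.map f' x → V.map f x ∉ L.dom.obj s →
      f = f') :
    ∃ L' : PartialLift i p t b, L ≤ L' ∧ x ∈ L'.dom.obj (op a) := by
  let L' : PartialLift i p t b :=
    { dom := L.dom ⊔ Subfunctor.ofSection x
      range_le := L.range_le.trans le_sup_left
      lift := extendLift L x z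
      naturality := fun s s' g y => by
        by_cases hy : y.1 ∈ L.dom.obj s
        · rw [extendLift_of_mem _ (L.dom.map g hy), extendLift_of_mem _ hy]
          exact L.naturality g ⟨y.1, hy⟩
        · obtain ⟨f, hf⟩ := exists_eq_map_of_notMem L x y hy
          rw [extendLift_eq hz huniq _ (f ≫ g) (by rw [Functor.map_comp_apply, hf]),
            extendLift_eq hz huniq y f hf]
          exact NatTrans.naturality_apply z g f.unop
      fac_left := fun s u => by
        rw [extendLift_of_mem _ (L.range_le s ⟨u, rfl⟩)]
        exact L.fac_left s u
      fac_right := fun s y => by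
        by_cases hy : y.1 ∈ L.dom.obj s
        · rw [extendLift_of_mem _ hy]
          exact L.fac_right s ⟨y.1, hy⟩
        · obtain ⟨f, hf⟩ := exists_eq_map_of_notMem L x y hy
          rw [extendLift_eq hz huniq y f hf, ← hf]
          exact ConcreteCategory.congr_hom (NatTrans.congr_app hzp s) f.unop }
  exact ⟨L', le_iff.2 ⟨le_sup_left, fun s y => extendLift_of_mem _ y.2⟩,
    Or.inr (Subfunctor.mem_ofSection_obj x)⟩

end Extension

lemma exists_le_mem_dom_of_hasLiftingProperty_bdryHom (R : SkeletalReedy A)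
    (hp : ∀ a : A, HasLiftingProperty (bdryHom R a) p) (L : PartialLift i p t b) {a : A}
    {x : V.obj (op a)} (hx : x ∉ L.dom.obj (op a))
    (hlow : ∀ b : A, R.deg b < R.deg a → ∀ y, y ∈ L.dom.obj (op b)) :
    ∃ L' : PartialLift i p t b, L ≤ L' ∧ x ∈ L'.dom.obj (op a) := by
  let top : bdry R a ⟶ Z :=
    { app := fun s => TypeCat.ofHom fun c =>
        L.lift s ⟨V.map c.1.op x, SkeletalReedy.map_mem_of_bdry hlow c⟩
      naturality := fun s s' g => ConcreteCategory.hom_ext _ _ fun c => by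
        have e : V.map (c.1.op ≫ g) x = V.map g (V.map c.1.op x) := Functor.map_comp_apply _ _ _ _
        exact (congrArg (L.lift s') (Subtype.ext e)).trans (L.naturality g _) }
  have sq : CommSq top (bdryHom R a) p (yonedaEquiv.symm x ≫ b) :=
    ⟨by ext s c; exact L.fac_right s _⟩
  refine exists_le_mem_dom (L := L) (x := x) (z := sq.lift) (fun s f hf => ?_) sq.fac_right
    (fun s f f' e hnot => Quiver.Hom.unop_inj
      (SkeletalReedy.eq_of_map_eq_of_notMem hx hlow f.unop f'.unop e hnot))
  rcases R.exists_bdry_or_minus f.unop with ⟨c, hc⟩ | hmin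
  · obtain rfl : f = c.1.op := Quiver.Hom.unop_inj hc.symm
    exact ConcreteCategory.congr_hom (NatTrans.congr_app sq.fac_left s) c
  · exact absurd hf (SkeletalReedy.map_notMem_of_minus hx f.unop hmin)

lemma mem_dom_of_isMax (R : SkeletalReedy A) (hp : ∀ a : A, HasLiftingProperty (bdryHom R a) p)
    {L : PartialLift i p t b} (hL : IsMax L) (s : Aᵒᵖ) (y : V.obj s) : y ∈ L.dom.obj s := by
  by_contra hy
  obtain ⟨a, ⟨x, hx⟩, hmin⟩ := (measure R.deg).wf.has_min
    {a | ∃ x : V.obj (op a), x ∉ L.dom.obj (op a)} ⟨s.unop, y, hy⟩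
  obtain ⟨L', hle, hx'⟩ := L.exists_le_mem_dom_of_hasLiftingProperty_bdryHom R hp hx
    fun b hb y => by_contra fun hy => hmin b ⟨y, hy⟩ hb
  exact hx ((le_iff.1 (hL hle)).1 _ hx')

end PartialLift

theorem isTrivFib_of_hasLiftingProperty_bdryHom (R : SkeletalReedy A) {Z W : Aᵒᵖ ⥤ Type}
    {p : Z ⟶ W} (hp : ∀ a : A, HasLiftingProperty (bdryHom R a) p) : IsTrivFib p := by
  intro U V i hi
  refine ⟨fun {t b} sq => ?_⟩
  have : Nonempty (PartialLift i p t b) := ⟨PartialLift.ofMono sq.w⟩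
  obtain ⟨L, hL⟩ := zorn_le_nonempty (α := PartialLift i p t b) fun c hc ⟨L₀, hL₀⟩ =>
    ⟨_, fun _ hL => PartialLift.le_ofChain c hc hL₀ hL⟩
  have hdom := L.mem_dom_of_isMax R hp hL
  let l : V ⟶ Z :=
    { app := fun s => TypeCat.ofHom fun y => L.lift s ⟨y, hdom s y⟩
      naturality := fun s s' g => ConcreteCategory.hom_ext _ _ fun y => L.naturality g ⟨y, _⟩ }
  exact ⟨⟨l, by ext s u; exact L.fac_left s u, by ext s y; exact L.fac_right s _⟩⟩

lemma rlp_hornClass_iff_isKanFib {X Y : SSet} (q : X ⟶ Y) : rlp hornClass q ↔ IsKanFib q :=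
  ⟨fun h n i hn => h _ ⟨n, i, hn, ⟨Iso.refl _⟩⟩, fun h _ _ _ ⟨n, i, hn, ⟨e⟩⟩ =>
    have := h n i hn
    HasLiftingProperty.of_arrow_iso_left e.symm q⟩

lemma anodyne_horn {n : ℕ} (i : Fin (n + 1)) (hn : 0 < n) : anodyne (SSet.horn n i).ι :=
  fun _ _ _ hq => hq _ ⟨n, i, hn, ⟨Iso.refl _⟩⟩

lemma IsKanFib.hasLiftingProperty_of_anodyne {X Y : SSet} {q : X ⟶ Y} (hq : IsKanFib q)
    {S T : SSet} {v : S ⟶ T} (hv : anodyne v) : HasLiftingProperty v q :=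
  hv q ((rlp_hornClass_iff_isKanFib q).2 hq)

lemma isKanFib_bsCorner_iff {U V : Aᵒᵖ ⥤ Type} (u : U ⟶ V)
    {X Y : (A × SimplexCategory)ᵒᵖ ⥤ Type} (f : X ⟶ Y) :
    IsKanFib (bsCorner u f) ↔
      ∀ (n : ℕ) (i : Fin (n + 1)), 0 < n →
        HasLiftingProperty u (slCorner f (SSet.horn n i).ι) :=
  forall₃_congr fun _ _ _ => hasLiftingProperty_bsCorner_iff_slCorner u _ f

lemma isTrivFib_slCorner_of_anodyne {X Y : (A × SimplexCategory)ᵒᵖ ⥤ Type} {f : X ⟶ Y}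
    (h : ∀ (n : ℕ) (i : Fin (n + 1)), 0 < n → IsTrivFib (slCorner f (SSet.horn n i).ι))
    {S T : SSet} {v : S ⟶ T} (hv : anodyne v) : IsTrivFib (slCorner f v) :=
  fun _ _ u hu => (hasLiftingProperty_bsCorner_iff_slCorner u v f).1
    (((isKanFib_bsCorner_iff u f).2 fun n i hn => h n i hn u hu).hasLiftingProperty_of_anodyne hv)

end Paper

open Paper CategoryTheory CategoryTheory.Limits in
/-- Let `A` be a skeletal Reedy category.  A morphism `f` of presheaves on `A × Δ` is a
fibration for the injective (vertical) model structure — i.e. `⟨∂a\f⟩` is a Kan fibration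
for every object `a` of `A` — if and only if `⟨f/Λⁿₖ⟩` is a trivial fibration of presheaves
on `A` for all `n ≥ 1` and `0 ≤ k ≤ n`, if and only if `⟨f/v⟩` is a trivial fibration for
every anodyne extension `v` of simplicial sets. -/
theorem stmt15 {A : Type} [SmallCategory A] (R : SkeletalReedy A)
    {X Y : (A × SimplexCategory)ᵒᵖ ⥤ Type} (f : X ⟶ Y) :
    ((∀ a : A, IsKanFib (bsCorner (bdryHom R a) f)) ↔
      ∀ (n : ℕ) (i : Fin (n + 1)), 0 < n →
        IsTrivFib (slCorner f ((SSet.horn n i).ι))) ∧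
    ((∀ a : A, IsKanFib (bsCorner (bdryHom R a) f)) ↔
      ∀ ⦃S T : SimplexCategoryᵒᵖ ⥤ Type⦄ (v : S ⟶ T), anodyne v →
        IsTrivFib (slCorner f v)) := by
  have horns : (∀ a : A, IsKanFib (bsCorner (bdryHom R a) f)) ↔
      ∀ (n : ℕ) (i : Fin (n + 1)), 0 < n → IsTrivFib (slCorner f (SSet.horn n i).ι) :=
    ⟨fun h n i hn => isTrivFib_of_hasLiftingProperty_bdryHom R fun a =>
        (isKanFib_bsCorner_iff _ f).1 (h a) n i hn,
      fun h a => (isKanFib_bsCorner_iff _ f).2 fun n i hn => h n i hn _ inferInstance⟩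
  have anodynes :
      (∀ (n : ℕ) (i : Fin (n + 1)), 0 < n → IsTrivFib (slCorner f (SSet.horn n i).ι)) ↔
        ∀ ⦃S T : SimplexCategoryᵒᵖ ⥤ Type⦄ (v : S ⟶ T), anodyne v →
          IsTrivFib (slCorner f v) :=
    ⟨fun h _ _ _ hv => isTrivFib_slCorner_of_anodyne h hv,
      fun h n i hn => h _ (anodyne_horn i hn)⟩
  exact ⟨horns, horns.trans anodynes⟩
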